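/- arXiv:0712.2371 — 2 statements merged into one kernel-verified Lean document; each statement's English description precedes it below -/
import Mathlib

section
/- For every integer a ≥ 1, with n = 2^a and K = 2a, there exist n×n complex matrices (A_{iI}, A_{iQ})_{i=1}^{2a}, all unitary, with A_{1I} = I_n, satisfying the CUW conditions, and such that A_{1Q} is not a scalar multiple of I_n (hence no A_{iQ} is a real scalar multiple of A_{iI}). Consequently, for every a ≥ 1 there exists a 2^a × 2^a unitary-weight single-symbol-decodable code in 2a complex variables, i.e., of rate a/2^{a−1} complex symbols per channel use. -/
open Matrix

/-- The SSD conditions on a family of weight-matrix pairs. -/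
def SSDConds {n K : ℕ} (AI AQ : Fin K → Matrix (Fin n) (Fin n) ℂ) : Prop :=
  ∀ i j : Fin K, i ≠ j →
    (AI i)ᴴ * AQ j + (AQ j)ᴴ * AI i = 0 ∧
    (AI i)ᴴ * AI j + (AI j)ᴴ * AI i = 0 ∧
    (AQ i)ᴴ * AQ j + (AQ j)ᴴ * AQ i = 0

/-- The CUW conditions on a family of weight-matrix pairs (index `⟨0,hK⟩`
plays the role of the index `1` of the paper). -/
def CUWConds {n K : ℕ} (hK : 0 < K) (AI AQ : Fin K → Matrix (Fin n) (Fin n) ℂ) : Prop :=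
  AI ⟨0, hK⟩ = 1 ∧
  (∀ i : Fin K, i ≠ ⟨0, hK⟩ → (AI i)ᴴ = -(AI i)) ∧
  (∀ i j : Fin K, i ≠ ⟨0, hK⟩ → j ≠ ⟨0, hK⟩ → i ≠ j → AI i * AI j = -(AI j * AI i)) ∧
  (AQ ⟨0, hK⟩)ᴴ = AQ ⟨0, hK⟩ ∧
  (∀ i : Fin K, i ≠ ⟨0, hK⟩ → AQ i = AQ ⟨0, hK⟩ * AI i) ∧
  (∀ j : Fin K, AQ ⟨0, hK⟩ * AI j = AI j * AQ ⟨0, hK⟩)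

/-!
Tensor products of Pauli matrices give `2a + 1` pairwise anticommuting hermitian involutions
`γ₀, …, γ_{2a}` of size `2^a`. Put `A_{1I} = 1`, let the other `A_{iI}` be `i γ_j` for
`1 ≤ j ≤ 2a - 1`, and put `A_{1Q} = i γ₀ γ_{2a}`: a hermitian involution that commutes with every
`γ_j` in between but anticommutes with `γ₀`, so it is not scalar. The CUW conditions imply
single-symbol decodability because `A_{1Q}` is hermitian and commutes with every `A_{iI}` and
`A_{iI}ᴴ = ±A_{iI}`, so it factors out of each SSD expression, leaving
`A_{iI}ᴴ A_{jI} + A_{jI}ᴴ A_{iI} = 0`.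
-/

open Kronecker

theorem commute_mul_of_anticomm {A : Type*} [Ring A] {P Q R : A} (hPR : P * R = -(R * P))
    (hQR : Q * R = -(R * Q)) : Commute (P * Q) R := by
  calc P * Q * R = -(P * R) * Q := by rw [mul_assoc, hQR]; noncomm_ring
    _ = R * (P * Q) := by rw [hPR]; noncomm_ring

namespace Matrix

section Kronecker

theorem neg_kronecker {l m n p R : Type*} [Ring R] (A : Matrix l m R) (B : Matrix n p R) :
    (-A) ⊗ₖ B = -(A ⊗ₖ B) := by
  ext; simp

theorem kronecker_neg {l m n p R : Type*} [Ring R] (A : Matrix l m R) (B : Matrix n p R) :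
    A ⊗ₖ (-B) = -(A ⊗ₖ B) := by
  ext; simp

variable {m n R : Type*} [Fintype m] [Fintype n] [CommRing R]

theorem kronecker_anticomm_of_anticomm_of_comm {A B : Matrix m m R} {P Q : Matrix n n R}
    (hAB : A * B = -(B * A)) (hPQ : P * Q = Q * P) :
    (A ⊗ₖ P) * (B ⊗ₖ Q) = -((B ⊗ₖ Q) * (A ⊗ₖ P)) := by
  rw [← mul_kronecker_mul, ← mul_kronecker_mul, hAB, hPQ, neg_kronecker]

theorem kronecker_anticomm_of_comm_of_anticomm {A B : Matrix m m R} {P Q : Matrix n n R}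
    (hAB : A * B = B * A) (hPQ : P * Q = -(Q * P)) :
    (A ⊗ₖ P) * (B ⊗ₖ Q) = -((B ⊗ₖ Q) * (A ⊗ₖ P)) := by
  rw [← mul_kronecker_mul, ← mul_kronecker_mul, hAB, hPQ, kronecker_neg]

end Kronecker

section Complex

variable {n : Type*} [Fintype n] {P Q R : Matrix n n ℂ}

theorem conjTranspose_I_smul_mul (hP : Pᴴ = P) (hQ : Qᴴ = Q) (hPQ : P * Q = -(Q * P)) :
    (Complex.I • (P * Q))ᴴ = Complex.I • (P * Q) := by
  rw [conjTranspose_smul, conjTranspose_mul, hP, hQ, hPQ, Complex.star_def, Complex.conj_I,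
    smul_neg, neg_smul]

theorem I_smul_mul_mul_self [DecidableEq n] (hP : P * P = 1) (hQ : Q * Q = 1)
    (hPQ : P * Q = -(Q * P)) :
    Complex.I • (P * Q) * (Complex.I • (P * Q)) = 1 := by
  have hsq : P * Q * (P * Q) = -1 := by
    calc P * Q * (P * Q) = P * (Q * P) * Q := by noncomm_ring
      _ = -(P * P * (Q * Q)) := by rw [← neg_neg (Q * P), ← hPQ]; noncomm_ring
      _ = -1 := by rw [hP, hQ, one_mul]
  rw [smul_mul_smul_comm, Complex.I_mul_I, hsq, neg_one_smul, neg_neg]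

theorem not_exists_eq_smul_one_of_anticomm [DecidableEq n] [Nonempty n] (hP : P * P = 1)
    (hR : R * R = 1) (hPR : P * R = -(R * P)) : ¬ ∃ c : ℂ, P = c • 1 := by
  rintro ⟨c, rfl⟩
  obtain ⟨i⟩ := ‹Nonempty n›
  have h : c • (1 : Matrix n n ℂ) = -(c • 1) :=
    calc c • 1 = c • 1 * R * R := by rw [mul_assoc, hR, mul_one]
      _ = -(c • 1) := by rw [hPR, mul_smul_one, neg_mul, smul_mul_assoc, hR]
  have hc : c = 0 := self_eq_neg.mp (by simpa using congrFun₂ h i i)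
  rw [hc, zero_smul, zero_mul] at hP
  exact zero_ne_one hP

end Complex

end Matrix

structure IsHermitianClifford {ι n R : Type*} [Fintype n] [DecidableEq n] [CommRing R]
    [StarRing R] (γ : ι → Matrix n n R) : Prop where
  conjTranspose_eq : ∀ k, (γ k)ᴴ = γ k
  mul_self : ∀ k, γ k * γ k = 1
  anticomm : Pairwise fun k l => γ k * γ l = -(γ l * γ k)

namespace IsHermitianClifford

variable {ι κ n m R : Type*} [Fintype n] [DecidableEq n] [Fintype m] [DecidableEq m]
  [CommRing R] [StarRing R] {γ : ι → Matrix n n R}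

theorem comp (hγ : IsHermitianClifford γ) {f : κ → ι} (hf : f.Injective) :
    IsHermitianClifford (γ ∘ f) :=
  ⟨fun k => hγ.conjTranspose_eq (f k), fun k => hγ.mul_self (f k),
    fun _ _ hkl => hγ.anticomm (hf.ne hkl)⟩

theorem reindex (hγ : IsHermitianClifford γ) (e : n ≃ m) :
    IsHermitianClifford fun k => reindexAlgEquiv R R e (γ k) where
  conjTranspose_eq k := by rw [coe_reindexAlgEquiv, conjTranspose_reindex, hγ.conjTranspose_eq]
  mul_self k := by rw [← map_mul, hγ.mul_self, map_one]
  anticomm k l hkl := by dsimp only; rw [← map_mul, ← map_mul, hγ.anticomm hkl, map_neg]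

theorem kronecker {p : Type*} [Fintype p] [DecidableEq p] {k : ℕ} {τ : Fin (k + 1) → Matrix p p R}
    (hγ : IsHermitianClifford γ) (hτ : IsHermitianClifford τ) :
    IsHermitianClifford (Sum.elim (fun i => γ i ⊗ₖ τ 0) fun j : Fin k => 1 ⊗ₖ τ j.succ) where
  conjTranspose_eq := by
    rintro (i | j) <;>
      simp only [Sum.elim_inl, Sum.elim_inr, conjTranspose_kronecker, conjTranspose_one,
        hγ.conjTranspose_eq, hτ.conjTranspose_eq]
  mul_self := by
    rintro (i | j) <;>
      simp only [Sum.elim_inl, Sum.elim_inr, ← mul_kronecker_mul, mul_one, hγ.mul_self,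
        hτ.mul_self, one_kronecker_one]
  anticomm := by
    rintro (i | j) (i' | j') h <;> simp only [Sum.elim_inl, Sum.elim_inr]
    · exact kronecker_anticomm_of_anticomm_of_comm (hγ.anticomm fun e => h (congrArg _ e)) rfl
    · exact kronecker_anticomm_of_comm_of_anticomm (by simp)
        (hτ.anticomm (Fin.succ_ne_zero j').symm)
    · exact kronecker_anticomm_of_comm_of_anticomm (by simp) (hτ.anticomm (Fin.succ_ne_zero j))
    · exact kronecker_anticomm_of_comm_of_anticomm rfl
        (hτ.anticomm fun e => h (congrArg _ (Fin.succ_injective _ e)))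

end IsHermitianClifford

def pauli : Fin 3 → Matrix (Fin 2) (Fin 2) ℂ :=
  ![!![0, 1; 1, 0], !![0, -Complex.I; Complex.I, 0], !![1, 0; 0, -1]]

theorem isHermitianClifford_pauli : IsHermitianClifford pauli where
  conjTranspose_eq k := by
    fin_cases k <;> ext i j <;> fin_cases i <;> fin_cases j <;> simp [pauli]
  mul_self k := by
    fin_cases k <;> ext i j <;> fin_cases i <;> fin_cases j <;>
      simp [pauli, mul_apply, Fin.sum_univ_two]
  anticomm k l h := by
    fin_cases k <;> fin_cases l <;> first | exact absurd rfl h |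
      (ext i j; fin_cases i <;> fin_cases j <;> simp [pauli, mul_apply, Fin.sum_univ_two])

theorem exists_isHermitianClifford_fin (a : ℕ) :
    ∃ γ : Fin (2 * a + 1) → Matrix (Fin (2 ^ a)) (Fin (2 ^ a)) ℂ, IsHermitianClifford γ := by
  induction a with
  | zero => exact ⟨fun _ => 1, fun _ => conjTranspose_one, fun _ => mul_one 1,
      fun k l h => absurd (Fin.ext (by omega)) h⟩
  | succ a ih =>
    obtain ⟨γ, hγ⟩ := ih
    let eIdx : Fin (2 * (a + 1) + 1) ≃ Fin (2 * a + 1) ⊕ Fin 2 :=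
      (finCongr (by ring)).trans finSumFinEquiv.symm
    let eDim : Fin (2 ^ a) × Fin 2 ≃ Fin (2 ^ (a + 1)) :=
      finProdFinEquiv.trans (finCongr (pow_succ 2 a).symm)
    exact ⟨_, ((hγ.kronecker isHermitianClifford_pauli).comp eIdx.injective).reindex eDim⟩

namespace CUWConds

variable {n K : ℕ} {hK : 0 < K} {AI AQ : Fin K → Matrix (Fin n) (Fin n) ℂ}

theorem aq_eq_mul_ai (h : CUWConds hK AI AQ) (i : Fin K) : AQ i = AQ ⟨0, hK⟩ * AI i := by
  by_cases hi : i = ⟨0, hK⟩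
  · rw [hi, h.1, mul_one]
  · exact h.2.2.2.2.1 i hi

theorem commute_conjTranspose_ai (h : CUWConds hK AI AQ) (i : Fin K) :
    Commute (AQ ⟨0, hK⟩) (AI i)ᴴ := by
  by_cases hi : i = ⟨0, hK⟩
  · rw [hi, h.1, conjTranspose_one]
    exact Commute.one_right _
  · rw [h.2.1 i hi]
    exact Commute.neg_right (h.2.2.2.2.2 i)

theorem conjTranspose_mul_add_conjTranspose_mul (h : CUWConds hK AI AQ) {i j : Fin K}
    (hij : i ≠ j) :
    (AI i)ᴴ * AI j + (AI j)ᴴ * AI i = 0 := by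
  by_cases hi : i = ⟨0, hK⟩
  · rw [hi, h.1, h.2.1 j (hi ▸ hij).symm]
    simp
  by_cases hj : j = ⟨0, hK⟩
  · rw [hj, h.1, h.2.1 i hi]
    simp
  rw [h.2.1 i hi, h.2.1 j hj, neg_mul, neg_mul, h.2.2.1 i j hi hj hij, neg_neg, add_neg_cancel]

theorem ssdConds (h : CUWConds hK AI AQ) : SSDConds AI AQ := by
  set B := AQ ⟨0, hK⟩
  have hc : ∀ k, Commute B (AI k)ᴴ := h.commute_conjTranspose_ai
  have hQH : ∀ j, (AQ j)ᴴ = (AI j)ᴴ * B := fun j => by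
    rw [h.aq_eq_mul_ai, conjTranspose_mul, h.2.2.2.1]
  have hIQ : ∀ i j, (AI i)ᴴ * AQ j = B * ((AI i)ᴴ * AI j) := fun i j => by
    rw [h.aq_eq_mul_ai j, ← mul_assoc, ← (hc i).eq, mul_assoc]
  have hQI : ∀ i j, (AQ j)ᴴ * AI i = B * ((AI j)ᴴ * AI i) := fun i j => by
    rw [hQH, ← (hc j).eq, mul_assoc]
  have hQQ : ∀ i j, (AQ i)ᴴ * AQ j = B * B * ((AI i)ᴴ * AI j) := fun i j => by
    rw [hQH, h.aq_eq_mul_ai j, mul_assoc, ← mul_assoc B, ← mul_assoc,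
      ← ((hc i).mul_left (hc i)).eq, mul_assoc]
  intro i j hij
  have hI := h.conjTranspose_mul_add_conjTranspose_mul hij
  exact ⟨by rw [hIQ, hQI, ← mul_add, hI, mul_zero], hI, by rw [hQQ, hQQ, ← mul_add, hI, mul_zero]⟩

theorem not_exists_aq_eq_smul_ai (h : CUWConds hK AI AQ) (hU : ∀ i, (AI i)ᴴ * AI i = 1)
    (hB : ¬ ∃ c : ℂ, AQ ⟨0, hK⟩ = c • 1) (i : Fin K) : ¬ ∃ c : ℂ, AQ i = c • AI i := by
  rintro ⟨c, hc⟩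
  refine hB ⟨c, ?_⟩
  have hinv : AI i * (AI i)ᴴ = 1 := mul_eq_one_comm.mp (hU i)
  calc AQ ⟨0, hK⟩ = AQ i * (AI i)ᴴ := by rw [h.aq_eq_mul_ai i, mul_assoc, hinv, mul_one]
    _ = c • 1 := by rw [hc, smul_mul_assoc, hinv]

end CUWConds

theorem Fin.zero_ne_last {K : ℕ} (hK : 0 < K) : (0 : Fin (K + 1)) ≠ Fin.last K :=
  Fin.ne_of_val_ne hK.ne

section CliffordCode

variable {n K : ℕ}

/-- With `0`-based indices, `A_0 = 1` and `A_i = i γ_i` for `0 < i < K`; the generators `γ_0`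
and `γ_K` are reserved for `cliffordDiscriminant`. -/
def cliffordWeightI (γ : Fin (K + 1) → Matrix (Fin n) (Fin n) ℂ) (i : Fin K) :
    Matrix (Fin n) (Fin n) ℂ :=
  if (i : ℕ) = 0 then 1 else Complex.I • γ i.castSucc

def cliffordDiscriminant (γ : Fin (K + 1) → Matrix (Fin n) (Fin n) ℂ) :
    Matrix (Fin n) (Fin n) ℂ :=
  Complex.I • (γ 0 * γ (Fin.last K))

def cliffordWeightQ (γ : Fin (K + 1) → Matrix (Fin n) (Fin n) ℂ) (i : Fin K) :
    Matrix (Fin n) (Fin n) ℂ :=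
  cliffordDiscriminant γ * cliffordWeightI γ i

theorem cliffordWeightI_zero (γ : Fin (K + 1) → Matrix (Fin n) (Fin n) ℂ) (hK : 0 < K) :
    cliffordWeightI γ ⟨0, hK⟩ = 1 :=
  if_pos rfl

theorem cliffordWeightQ_zero (γ : Fin (K + 1) → Matrix (Fin n) (Fin n) ℂ) (hK : 0 < K) :
    cliffordWeightQ γ ⟨0, hK⟩ = cliffordDiscriminant γ := by
  rw [cliffordWeightQ, cliffordWeightI_zero, mul_one]

namespace IsHermitianClifford

variable {γ : Fin (K + 1) → Matrix (Fin n) (Fin n) ℂ} (hγ : IsHermitianClifford γ)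
include hγ

theorem conjTranspose_cliffordWeightI_of_ne_zero {i : Fin K} (hi : (i : ℕ) ≠ 0) :
    (cliffordWeightI γ i)ᴴ = -cliffordWeightI γ i := by
  simp [cliffordWeightI, hi, hγ.conjTranspose_eq]

theorem cliffordWeightI_anticomm {i j : Fin K} (hi : (i : ℕ) ≠ 0) (hj : (j : ℕ) ≠ 0)
    (hij : i ≠ j) :
    cliffordWeightI γ i * cliffordWeightI γ j = -(cliffordWeightI γ j * cliffordWeightI γ i) := by
  simp only [cliffordWeightI, hi, hj, if_false, smul_mul_smul_comm,
    hγ.anticomm (Fin.castSucc_injective K |>.ne hij), smul_neg]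

theorem conjTranspose_cliffordWeightI_mul_self (i : Fin K) :
    (cliffordWeightI γ i)ᴴ * cliffordWeightI γ i = 1 := by
  by_cases hi : (i : ℕ) = 0
  · simp [cliffordWeightI, hi]
  · rw [hγ.conjTranspose_cliffordWeightI_of_ne_zero hi]
    simp [cliffordWeightI, hi, smul_smul, hγ.mul_self]

theorem commute_cliffordDiscriminant (i : Fin K) :
    Commute (cliffordDiscriminant γ) (cliffordWeightI γ i) := by
  by_cases hi : (i : ℕ) = 0
  · simp [cliffordWeightI, hi]
  · simp only [cliffordDiscriminant, cliffordWeightI, hi, if_false]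
    refine ((commute_mul_of_anticomm (hγ.anticomm ?_) (hγ.anticomm ?_)).smul_left _).smul_right _
    · exact fun h => hi (by simpa using congrArg Fin.val h.symm)
    · exact (Fin.castSucc_ne_last i).symm

variable (hK : 0 < K)
include hK

theorem conjTranspose_cliffordDiscriminant :
    (cliffordDiscriminant γ)ᴴ = cliffordDiscriminant γ :=
  conjTranspose_I_smul_mul (hγ.conjTranspose_eq _) (hγ.conjTranspose_eq _)
    (hγ.anticomm (Fin.zero_ne_last hK))

theorem cliffordDiscriminant_mul_self : cliffordDiscriminant γ * cliffordDiscriminant γ = 1 :=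
  I_smul_mul_mul_self (hγ.mul_self _) (hγ.mul_self _) (hγ.anticomm (Fin.zero_ne_last hK))

theorem not_exists_cliffordDiscriminant_eq_smul_one [NeZero n] :
    ¬ ∃ c : ℂ, cliffordDiscriminant γ = c • 1 := by
  refine not_exists_eq_smul_one_of_anticomm (hγ.cliffordDiscriminant_mul_self hK)
    (hγ.mul_self 0) ?_
  simp only [cliffordDiscriminant, smul_mul_assoc, mul_smul_comm, ← smul_neg]
  rw [mul_assoc, ← neg_neg (γ (Fin.last K) * γ 0), ← hγ.anticomm (Fin.zero_ne_last hK)]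
  noncomm_ring

theorem conjTranspose_cliffordWeightQ_mul_self (i : Fin K) :
    (cliffordWeightQ γ i)ᴴ * cliffordWeightQ γ i = 1 := by
  rw [cliffordWeightQ, conjTranspose_mul, hγ.conjTranspose_cliffordDiscriminant hK, mul_assoc,
    ← mul_assoc (cliffordDiscriminant γ), hγ.cliffordDiscriminant_mul_self hK, one_mul,
    hγ.conjTranspose_cliffordWeightI_mul_self]

theorem cuwConds_cliffordWeight : CUWConds hK (cliffordWeightI γ) (cliffordWeightQ γ) := by
  have hQ0 := cliffordWeightQ_zero γ hK
  refine ⟨cliffordWeightI_zero γ hK, fun i hi => ?_, fun i j hi hj hij => ?_, ?_,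
    fun i _ => by rw [hQ0]; rfl, fun j => by rw [hQ0]; exact hγ.commute_cliffordDiscriminant j⟩
  · exact hγ.conjTranspose_cliffordWeightI_of_ne_zero (Fin.val_ne_iff.mpr hi)
  · exact hγ.cliffordWeightI_anticomm (Fin.val_ne_iff.mpr hi) (Fin.val_ne_iff.mpr hj) hij
  · rw [hQ0]; exact hγ.conjTranspose_cliffordDiscriminant hK

end IsHermitianClifford

end CliffordCode

theorem exists_cuw_ssd_code_general (a : ℕ) (hK : 0 < 2 * a) :
    ∃ AI AQ : Fin (2 * a) → Matrix (Fin (2 ^ a)) (Fin (2 ^ a)) ℂ,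
      (∀ i, (AI i)ᴴ * AI i = 1) ∧
      (∀ i, (AQ i)ᴴ * AQ i = 1) ∧
      CUWConds hK AI AQ ∧
      (¬ ∃ c : ℂ, AQ ⟨0, hK⟩ = c • (1 : Matrix (Fin (2 ^ a)) (Fin (2 ^ a)) ℂ)) ∧
      (∀ i, ¬ ∃ c : ℝ, AQ i = (c : ℂ) • AI i) ∧
      SSDConds AI AQ := by
  obtain ⟨γ, hγ⟩ := exists_isHermitianClifford_fin a
  have hCUW := hγ.cuwConds_cliffordWeight hK
  have hB : ¬ ∃ c : ℂ, cliffordWeightQ γ ⟨0, hK⟩ = c • 1 := by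
    rw [cliffordWeightQ_zero]; exact hγ.not_exists_cliffordDiscriminant_eq_smul_one hK
  refine ⟨cliffordWeightI γ, cliffordWeightQ γ, hγ.conjTranspose_cliffordWeightI_mul_self,
    hγ.conjTranspose_cliffordWeightQ_mul_self hK, hCUW, hB, fun i ⟨c, hc⟩ =>
      hCUW.not_exists_aq_eq_smul_ai hγ.conjTranspose_cliffordWeightI_mul_self hB i ⟨c, hc⟩,
    hCUW.ssdConds⟩

/-- For every `a ≥ 1` there exists a `2^a × 2^a` CUW-SSD code in `K = 2a`
complex variables (rate `a/2^(a-1)`): all weight matrices unitary, the CUW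
conditions hold, the discriminant is non-scalar, no `A_{iQ}` is a real scalar
multiple of `A_{iI}`, and the family is single-symbol decodable. -/
theorem exists_cuw_ssd_code (a : ℕ) (ha : 1 ≤ a) (hK : 0 < 2 * a) :
    ∃ AI AQ : Fin (2 * a) → Matrix (Fin (2 ^ a)) (Fin (2 ^ a)) ℂ,
      (∀ i, (AI i)ᴴ * AI i = 1) ∧
      (∀ i, (AQ i)ᴴ * AQ i = 1) ∧
      CUWConds hK AI AQ ∧
      (¬ ∃ c : ℂ, AQ ⟨0, hK⟩ = c • (1 : Matrix (Fin (2 ^ a)) (Fin (2 ^ a)) ℂ)) ∧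
      (∀ i, ¬ ∃ c : ℝ, AQ i = (c : ℂ) • AI i) ∧
      SSDConds AI AQ :=
  exists_cuw_ssd_code_general a hK
end

section
/- Let A_1,…,A_K (K ≥ 1) be n×n complex matrices that are unitary, skew-Hermitian, and pairwise anticommuting, and let P be an n×n Hermitian unitary matrix anticommuting with every A_i (PA_i = −A_iP). Set A_{iI} = A_i and A_{iQ} = P·A_i, and define the normalized matrices Ã_{iI} = A_{1I}ᴴ A_{iI} and Ã_{iQ} = A_{1I}ᴴ A_{iQ}. Then the normalized family satisfies the CUW conditions: Ã_{1I} = I_n; Ã_{iI}ᴴ = −Ã_{iI} for 2 ≤ i ≤ K; Ã_{iI}Ã_{jI} = −Ã_{jI}Ã_{iI} for 2 ≤ i ≠ j ≤ K; Ã_{1Q}ᴴ = Ã_{1Q}; Ã_{iQ} = Ã_{1Q}Ã_{iI} for 2 ≤ i ≤ K; and Ã_{1Q}Ã_{jI} = Ã_{jI}Ã_{1Q} for 1 ≤ j ≤ K. That is, a normalized Minkowski-Clifford UW-SSD code is a Clifford UW-SSD code. -/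
/-!
Put `w = A₁ᴴ = -A₁`, so `w * w = -1`, and `P` and every `Aᵢ` with `i ≠ 1` anticommute
with `w`. Then `(w a) (w b) = a b` for such `a`, which transfers the anticommutation of
the `Aᵢ` to the normalized matrices, and a product of two skew-Hermitian anticommuting
matrices is skew-Hermitian. The normalized `A_{1Q} = w P A₁` is simply `-P`: it is
Hermitian and commutes with every `w Aⱼ`, because `P` anticommutes with both factors.
-/

open Matrix

def Anticommute {R : Type*} [Mul R] [Neg R] (a b : R) : Prop :=
  a * b = -(b * a)

namespace Anticommute

section Ring

variable {R : Type*} [Ring R] {a b c w : R}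

theorem neg_right (h : Anticommute a b) : Anticommute a (-b) := by
  rw [Anticommute, mul_neg, neg_mul, h]

theorem symm (h : Anticommute a b) : Anticommute b a := by
  rw [Anticommute, h, neg_neg]

theorem commute_mul_right (hb : Anticommute a b) (hc : Anticommute a c) :
    Commute a (b * c) :=
  calc a * (b * c) = -(b * a * c) := by rw [← mul_assoc, hb, neg_mul]
    _ = b * c * a := by rw [mul_assoc, hc, mul_neg, neg_neg, mul_assoc]

theorem mul_mul_mul_of_mul_self_eq_neg_one (hw : w * w = -1) (ha : Anticommute a w) :
    w * a * (w * b) = a * b :=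
  calc w * a * (w * b) = -(w * w * a * b) := by
        rw [mul_assoc w a, ← mul_assoc a, ha]; simp only [neg_mul, mul_neg, mul_assoc]
    _ = a * b := by rw [hw, neg_one_mul, neg_mul, neg_neg]

theorem mul_left_of_mul_self_eq_neg_one (hw : w * w = -1) (ha : Anticommute a w)
    (hb : Anticommute b w) (hab : Anticommute a b) : Anticommute (w * a) (w * b) := by
  rw [Anticommute, mul_mul_mul_of_mul_self_eq_neg_one hw ha,
    mul_mul_mul_of_mul_self_eq_neg_one hw hb, hab]

theorem mul_mul_eq_neg_of_mul_eq_one (hwb : w * b = 1) (h : Anticommute a b) :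
    w * (a * b) = -a := by
  rw [h, mul_neg, ← mul_assoc, hwb, one_mul]

theorem mul_mul_eq_neg_mul_mul (h : Anticommute w a) : w * (a * b) = -a * (w * b) := by
  rw [← mul_assoc, h, neg_mul, neg_mul, mul_assoc]

end Ring

theorem star_mul_eq_neg {R : Type*} [Ring R] [StarRing R] {a w : R} (ha : star a = -a)
    (hw : star w = -w) (h : Anticommute a w) : star (w * a) = -(w * a) := by
  rw [StarMul.star_mul, ha, hw, neg_mul_neg, h]

end Anticommute

theorem normalized_mcuw_is_cuw_general {n K : ℕ} (hK : 0 < K)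
    (A : Fin K → Matrix (Fin n) (Fin n) ℂ)
    (hAu : ∀ i, (A i)ᴴ * A i = 1)
    (hAs : ∀ i, (A i)ᴴ = -(A i))
    (hAa : ∀ i j, i ≠ j → A i * A j = -(A j * A i))
    (P : Matrix (Fin n) (Fin n) ℂ)
    (hPh : Pᴴ = P)
    (hPa : ∀ i, P * A i = -(A i * P)) :
    CUWConds hK
      (fun i => (A ⟨0, hK⟩)ᴴ * A i)
      (fun i => (A ⟨0, hK⟩)ᴴ * (P * A i)) := by
  simp only [CUWConds]
  set u := A ⟨0, hK⟩
  set w := uᴴ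
  have hw : w = -u := hAs _
  have hww : w * w = -1 := by nth_rewrite 2 [hw]; rw [mul_neg, hAu]
  have hAw : ∀ i, i ≠ ⟨0, hK⟩ → Anticommute (A i) w := fun i hi => by
    rw [hw]; exact Anticommute.neg_right (hAa i _ hi)
  have hPw : Anticommute P w := by rw [hw]; exact Anticommute.neg_right (hPa _)
  have hQ : w * (P * u) = -P := Anticommute.mul_mul_eq_neg_of_mul_eq_one (hAu _) (hPa _)
  refine ⟨hAu _, fun i hi => ?_, fun i j hi hj hij => ?_, ?_, fun i _ => ?_, fun j => ?_⟩
  · have hw_skew : star w = -w := by rw [hw, star_neg, star_eq_conjTranspose, hAs, neg_neg]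
    exact Anticommute.star_mul_eq_neg (hAs i) hw_skew (hAw i hi)
  · exact Anticommute.mul_left_of_mul_self_eq_neg_one hww (hAw i hi) (hAw j hj) (hAa i j hij)
  · simp only [hQ, conjTranspose_neg, hPh]
  · simp only [hQ]; exact hPw.symm.mul_mul_eq_neg_mul_mul
  · simp only [hQ]; exact ((hPw.commute_mul_right (hPa j)).neg_left).eq

/-- A normalized Minkowski-Clifford UW-SSD family satisfies the CUW
conditions: normalizing the weight matrices `A_{iI} = A_i`, `A_{iQ} = P A_i`
(with `A_i` unitary skew-Hermitian pairwise anticommuting, `P` Hermitian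
unitary anticommuting with the `A_i`s) yields a Clifford UW-SSD code. -/
theorem normalized_mcuw_is_cuw {n K : ℕ} (hK : 0 < K)
    (A : Fin K → Matrix (Fin n) (Fin n) ℂ)
    (hAu : ∀ i, (A i)ᴴ * A i = 1)
    (hAs : ∀ i, (A i)ᴴ = -(A i))
    (hAa : ∀ i j, i ≠ j → A i * A j = -(A j * A i))
    (P : Matrix (Fin n) (Fin n) ℂ)
    (hPh : Pᴴ = P) (hPu : Pᴴ * P = 1)
    (hPa : ∀ i, P * A i = -(A i * P)) :
    CUWConds hK
      (fun i => (A ⟨0, hK⟩)ᴴ * A i)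
      (fun i => (A ⟨0, hK⟩)ᴴ * (P * A i)) :=
  normalized_mcuw_is_cuw_general hK A hAu hAs hAa P hPh hPa
end
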